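/- For N = 2 and M > 0, the structure function Y_{2,p,q,M}(x) satisfies the unitarity-type relation Y_{2,p,q,M}(x) · Y_{2,p,q,M}(q x) = 1. -/

import Mathlib

open Complex

noncomputable def pochInf (x a : ℂ) : ℂ := ∏' n : ℕ, (1 - x * a ^ n)

noncomputable def ThetaFn (a x : ℂ) : ℂ :=
  pochInf x a * pochInf (a * x⁻¹) a * pochInf a a

noncomputable def Ystruct (p q x : ℂ) (M : ℕ) : ℂ :=
  ∏ k ∈ Finset.Icc 1 (2 * M),
    (ThetaFn (q ^ 4) (x ^ 2 * p ^ (-(k : ℤ))) ^ 2 *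
      ThetaFn (q ^ 4) (x ^ 2 * q ^ 2 * p ^ (k : ℤ)) *
      ThetaFn (q ^ 4) (x ^ 2 * q ^ (-2 : ℤ) * p ^ (k : ℤ))) /
    (ThetaFn (q ^ 4) (x ^ 2 * p ^ (k : ℤ)) ^ 2 *
      ThetaFn (q ^ 4) (x ^ 2 * q ^ 2 * p ^ (-(k : ℤ))) *
      ThetaFn (q ^ 4) (x ^ 2 * q ^ (-2 : ℤ) * p ^ (-(k : ℤ))))

/-! Each factor of `Ystruct` pairs with the corresponding factor at `q x`: replacing `x` by `q x`
multiplies `x²` by `q²`, so every theta function of `Y(q x)` is, after at most one use of the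
quasi-periodicity `Θ_a(a y) = -y⁻¹ Θ_a(y)` with `a = q⁴ = (q²)²`, one of those of `Y(x)`, and the
prefactors `-y⁻¹` cancel in pairs. -/

lemma multipliable_one_sub_mul_pow {a : ℂ} (ha : ‖a‖ < 1) (x : ℂ) :
    Multipliable fun n : ℕ ↦ 1 - x * a ^ n := by
  have hsum : Summable fun n : ℕ ↦ ‖-(x * a ^ n)‖ := by
    simpa only [norm_neg, norm_mul, norm_pow] using
      (summable_geometric_of_lt_one (norm_nonneg a) ha).mul_left ‖x‖
  simpa only [← sub_eq_add_neg] using multipliable_one_add_of_summable hsum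

lemma pochInf_eq_one_sub_mul {a : ℂ} (ha : ‖a‖ < 1) (x : ℂ) :
    pochInf x a = (1 - x) * pochInf (a * x) a := by
  have hm : Multipliable fun n : ℕ ↦ 1 - x * a ^ (n + 1) :=
    (multipliable_one_sub_mul_pow ha (a * x)).congr fun n ↦ by ring
  rw [pochInf, tprod_eq_zero_mul' (f := fun n ↦ 1 - x * a ^ n) hm, pochInf, pow_zero, mul_one]
  exact congrArg _ (tprod_congr fun n ↦ by ring)

lemma ThetaFn_self_mul {a y : ℂ} (ha : ‖a‖ < 1) (ha0 : a ≠ 0) (hy : y ≠ 0) :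
    ThetaFn a (a * y) = -y⁻¹ * ThetaFn a y := by
  have harg : a * (a * y)⁻¹ = y⁻¹ := by field_simp
  have hinv : (1 : ℂ) - y⁻¹ = -y⁻¹ * (1 - y) := by field_simp; ring
  rw [ThetaFn, ThetaFn, harg, pochInf_eq_one_sub_mul ha y⁻¹, pochInf_eq_one_sub_mul ha y, hinv]
  ring

noncomputable def yFactor (θ : ℂ → ℂ) (X r s : ℂ) : ℂ :=
  θ (X * s⁻¹) ^ 2 * θ (X * r * s) * θ (X * r⁻¹ * s) /
    (θ (X * s) ^ 2 * θ (X * r * s⁻¹) * θ (X * r⁻¹ * s⁻¹))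

lemma yFactor_mul_yFactor_mul_left_eq_one {θ : ℂ → ℂ} {X r s : ℂ}
    (hX : X ≠ 0) (hr : r ≠ 0) (hs : s ≠ 0)
    (hθ : ∀ y ≠ 0, θ (r ^ 2 * y) = -y⁻¹ * θ y)
    (h₁ : θ (X * s) ≠ 0) (h₂ : θ (X * s⁻¹) ≠ 0)
    (h₃ : θ (X * r⁻¹ * s) ≠ 0) (h₄ : θ (X * r⁻¹ * s⁻¹) ≠ 0) :
    yFactor θ X r s * yFactor θ (r * X) r s = 1 := by
  have shift : ∀ y z, y ≠ 0 → z = r ^ 2 * y → θ z = -y⁻¹ * θ y := by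
    rintro y _ hy rfl
    exact hθ y hy
  rw [yFactor, yFactor,
    shift (X * r⁻¹ * s) (X * r * s) (by positivity) (by field_simp),
    shift (X * r⁻¹ * s) (r * X * s) (by positivity) (by field_simp),
    shift (X * r⁻¹ * s⁻¹) (X * r * s⁻¹) (by positivity) (by field_simp),
    shift (X * r⁻¹ * s⁻¹) (r * X * s⁻¹) (by positivity) (by field_simp),
    shift (X * s) (r * X * r * s) (by positivity) (by ring),
    shift (X * s⁻¹) (r * X * r * s⁻¹) (by positivity) (by ring),
    congrArg θ (by field_simp : r * X * r⁻¹ * s = X * s),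
    congrArg θ (by field_simp : r * X * r⁻¹ * s⁻¹ = X * s⁻¹)]
  generalize θ (X * s) = A at h₁ ⊢
  generalize θ (X * s⁻¹) = B at h₂ ⊢
  generalize θ (X * r⁻¹ * s) = C at h₃ ⊢
  generalize θ (X * r⁻¹ * s⁻¹) = D at h₄ ⊢
  field_simp

lemma Ystruct_eq_prod_yFactor (p q x : ℂ) (M : ℕ) :
    Ystruct p q x M =
      ∏ k ∈ Finset.Icc 1 (2 * M), yFactor (ThetaFn (q ^ 4)) (x ^ 2) (q ^ 2) (p ^ k) := by
  simp only [Ystruct, yFactor, zpow_neg, zpow_natCast, zpow_ofNat]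

theorem Ystruct_unitarity_general (p q x : ℂ) (M : ℕ)
    (hq0 : 0 < ‖q‖) (hq1 : ‖q‖ < 1) (hp : p ≠ 0) (hx : x ≠ 0)
    (hnz : ∀ j k : ℤ, ThetaFn (q ^ 4) (x ^ 2 * q ^ j * p ^ k) ≠ 0) :
    Ystruct p q x M * Ystruct p q (q * x) M = 1 := by
  have hq : q ≠ 0 := norm_pos_iff.mp hq0
  have hθ : ∀ y ≠ 0, ThetaFn (q ^ 4) ((q ^ 2) ^ 2 * y) = -y⁻¹ * ThetaFn (q ^ 4) y := fun y hy ↦ by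
    rw [← pow_mul]
    exact ThetaFn_self_mul (by rw [norm_pow]; exact pow_lt_one₀ hq0.le hq1 four_ne_zero)
      (pow_ne_zero 4 hq) hy
  rw [Ystruct_eq_prod_yFactor, Ystruct_eq_prod_yFactor, mul_pow, ← Finset.prod_mul_distrib]
  refine Finset.prod_eq_one fun k _ ↦
    yFactor_mul_yFactor_mul_left_eq_one (by positivity) (by positivity) (by positivity) hθ
      ?_ ?_ ?_ ?_
  · simpa using hnz 0 k
  · simpa using hnz 0 (-k)
  · simpa using hnz (-2) k
  · simpa using hnz (-2) (-k)

/-- Unitarity-type relation: Y_{2,p,q,M}(x) · Y_{2,p,q,M}(qx) = 1. -/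
theorem Ystruct_unitarity (p q x : ℂ) (M : ℕ) (hM : 0 < M)
    (hq0 : 0 < ‖q‖) (hq1 : ‖q‖ < 1) (hp : p ≠ 0) (hx : x ≠ 0)
    (hnz : ∀ j k : ℤ, ThetaFn (q ^ 4) (x ^ 2 * q ^ j * p ^ k) ≠ 0) :
    Ystruct p q x M * Ystruct p q (q * x) M = 1 :=
  Ystruct_unitarity_general p q x M hq0 hq1 hp hx hnz
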